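/- arXiv:1711.10202 — 3 statements merged into one kernel-verified Lean document; each statement's English description precedes it below -/
import Mathlib

section
/- There exists a constant C > 0 such that for every n ≥ 1, E[∑_{x∈ℤ^d} N_n(x)^4] ≤ C·n, where N_n(x) is the occupation time of the transient random walk (S_n). -/
/-!
Expanding the power, `∑ₓ N_n(x)^4` counts the quadruples `(i₁, …, i₄) ∈ [1, n]^4` with
`S_{i₁} = ⋯ = S_{i₄}`. Up to a factor `4^4` one may restrict to sorted quadruples
`i₁ ≤ i₂ ≤ i₃ ≤ i₄`, and for these the independence and stationarity of the increments give
`P(S_{i₁} = ⋯ = S_{i₄}) = p(i₂ - i₁) p(i₃ - i₂) p(i₄ - i₃)` with `p(m) = P(S_m = 0)`. Summing over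
`i₁` and the three gaps bounds the expectation by `4^4 n (∑_{m ≤ n} p(m))^3`, and transience bounds
`∑_{m ≤ n} p(m)` by `1 + ∑_{m ≥ 1} p(m) < ∞`.
-/

open MeasureTheory ProbabilityTheory Finset

lemma forall_apply_eq_apply_zero_iff {α : Type*} {k : ℕ} {g : Fin (k + 1) → α} :
    (∀ m, g m = g 0) ↔ ∀ j : Fin k, g j.succ = g j.castSucc :=
  ⟨fun h j ↦ (h j.succ).trans (h j.castSucc).symm,
    fun h m ↦ Fin.induction rfl (fun j ↦ (h j).trans) m⟩

lemma forall_apply_perm_eq_apply_perm_zero_iff {α : Type*} {k : ℕ} (g : Fin (k + 1) → α)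
    (σ : Equiv.Perm (Fin (k + 1))) : (∀ m, g (σ m) = g (σ 0)) ↔ ∀ m, g m = g 0 :=
  ⟨fun h m ↦ by simpa using (h (σ.symm m)).trans (h (σ.symm 0)).symm,
    fun h m ↦ (h _).trans (h _).symm⟩

lemma tsum_sum_ite_pow_eq {ι α : Type*} [DecidableEq α] (f : ι → α) (I : Finset ι) (k : ℕ) :
    ∑' x, (∑ i ∈ I, if f i = x then (1 : ℝ) else 0) ^ (k + 1)
      = ∑ v ∈ Fintype.piFinset fun _ : Fin (k + 1) ↦ I,
          if ∀ m, f (v m) = f (v 0) then 1 else 0 := by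
  have hsingle : ∀ v : Fin (k + 1) → ι, HasSum (fun x ↦ ∏ m, if f (v m) = x then (1 : ℝ) else 0)
      (if ∀ m, f (v m) = f (v 0) then 1 else 0) := fun v ↦ by
    convert hasSum_single (f := fun x ↦ ∏ m, if f (v m) = x then (1 : ℝ) else 0) (f (v 0))
      fun x hx ↦ prod_eq_zero (mem_univ 0) (if_neg (Ne.symm hx))
    simp [prod_boole]
  simp_rw [← Fin.prod_const, prod_univ_sum]
  exact (hasSum_sum fun v _ ↦ hsingle v).tsum_eq

lemma integral_tsum_sum_ite_pow_eq {Ω ι E : Type*} [MeasurableSpace Ω] [MeasurableSpace E]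
    {P : Measure Ω} [IsFiniteMeasure P] [DecidableEq E] [MeasurableEq E] {S : ι → Ω → E}
    (hSmeas : ∀ i, Measurable (S i)) (I : Finset ι) (k : ℕ) :
    ∫ ω, ∑' x, (∑ i ∈ I, if S i ω = x then (1 : ℝ) else 0) ^ (k + 1) ∂P
      = ∑ v ∈ Fintype.piFinset fun _ : Fin (k + 1) ↦ I,
          P.real {ω | ∀ m, S (v m) ω = S (v 0) ω} := by
  have hA : ∀ v : Fin (k + 1) → ι, MeasurableSet {ω | ∀ m, S (v m) ω = S (v 0) ω} := fun v ↦ by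
    simp only [Set.ofPred_forall]
    exact .iInter fun m ↦ measurableSet_eq_fun (hSmeas _) (hSmeas _)
  have hindicator : ∀ (v : Fin (k + 1) → ι) ω,
      (if ∀ m, S (v m) ω = S (v 0) ω then (1 : ℝ) else 0)
        = {ω | ∀ m, S (v m) ω = S (v 0) ω}.indicator 1 ω := fun v ω ↦ by
    simp [Set.indicator_apply]
  simp_rw [tsum_sum_ite_pow_eq (S · _), hindicator]
  exact (integral_finsetSum _ fun v _ ↦ (integrable_const (1 : ℝ)).indicator (hA v)).trans
    (sum_congr rfl fun v _ ↦ integral_indicator_one (hA v))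

lemma sum_piFinset_le_pow_mul_sum_monotone {α : Type*} [LinearOrder α] {k : ℕ} (I : Finset α)
    (r : (Fin k → α) → ℝ) (hr : ∀ v, 0 ≤ r v)
    (hperm : ∀ v (σ : Equiv.Perm (Fin k)), r (v ∘ σ) = r v) :
    ∑ v ∈ Fintype.piFinset fun _ ↦ I, r v
      ≤ k ^ k * ∑ w ∈ (Fintype.piFinset fun _ ↦ I).filter Monotone, r w := by
  classical
  set s := Fintype.piFinset fun _ : Fin k ↦ I
  have hsort : ∀ v ∈ s, v ∘ Tuple.sort v ∈ s.filter Monotone := fun v hv ↦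
    mem_filter.2 ⟨Fintype.mem_piFinset.2 fun m ↦ Fintype.mem_piFinset.1 hv _, Tuple.monotone_sort v⟩
  -- a tuple sorting to `w` takes its values in the range of `w`
  have hfiber : ∀ w, #{v ∈ s | v ∘ Tuple.sort v = w} ≤ k ^ k := fun w ↦ calc
    #{v ∈ s | v ∘ Tuple.sort v = w} ≤ #(Fintype.piFinset fun _ ↦ univ.image w) := by
        refine card_le_card fun v hv ↦ Fintype.mem_piFinset.2 fun m ↦ mem_image.2 ?_
        refine ⟨(Tuple.sort v)⁻¹ m, mem_univ _, ?_⟩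
        simp [← (mem_filter.1 hv).2]
    _ ≤ k ^ k := by
        rw [Fintype.card_piFinset_const]
        exact Nat.pow_le_pow_left ((card_image_le).trans (by simp)) k
  calc ∑ v ∈ s, r v = ∑ v ∈ s, r (v ∘ Tuple.sort v) := sum_congr rfl fun v _ ↦ (hperm v _).symm
    _ = ∑ w ∈ s.filter Monotone, #{v ∈ s | v ∘ Tuple.sort v = w} * r w := by
        rw [← sum_fiberwise_of_maps_to hsort]
        refine sum_congr rfl fun w _ ↦ ?_
        rw [sum_congr rfl fun v hv ↦ congrArg r (mem_filter.1 hv).2, sum_const, nsmul_eq_mul]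
    _ ≤ ∑ w ∈ s.filter Monotone, k ^ k * r w :=
        sum_le_sum fun w _ ↦ mul_le_mul_of_nonneg_right (by exact_mod_cast hfiber w) (hr w)
    _ = k ^ k * ∑ w ∈ s.filter Monotone, r w := (mul_sum _ _ _).symm

lemma sum_monotone_prod_sub_le (n k : ℕ) (q : ℕ → ℝ) (hq : ∀ u, 0 ≤ q u) :
    ∑ w ∈ (Fintype.piFinset fun _ : Fin (k + 1) ↦ Icc 1 n).filter Monotone,
        ∏ j : Fin k, q (w j.succ - w j.castSucc)
      ≤ n * (∑ u ∈ range (n + 1), q u) ^ k := by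
  classical
  set M := (Fintype.piFinset fun _ : Fin (k + 1) ↦ Icc 1 n).filter Monotone
  set ψ : (Fin (k + 1) → ℕ) → ℕ × (Fin k → ℕ) := fun w ↦ (w 0, fun j ↦ w j.succ - w j.castSucc)
  have hle : ∀ w ∈ M, ∀ j : Fin k, w j.castSucc ≤ w j.succ := fun w hw j ↦
    (mem_filter.1 hw).2 (Fin.castSucc_le_succ j)
  -- a monotone tuple is determined by its first entry and its increments
  have hinj : Set.InjOn ψ M := by
    intro w hw w' hw' h
    simp only [ψ, Prod.mk.injEq, funext_iff] at h
    funext m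
    induction m using Fin.induction with
    | zero => exact h.1
    | succ j ih => have := hle w hw j; have := hle w' hw' j; have := h.2 j; omega
  have hmaps : M.image ψ ⊆ Icc 1 n ×ˢ Fintype.piFinset fun _ ↦ range (n + 1) := by
    intro z hz
    obtain ⟨w, hw, rfl⟩ := mem_image.1 hz
    have hw' := fun m ↦ mem_Icc.1 (Fintype.mem_piFinset.1 (mem_filter.1 hw).1 m)
    refine mem_product.2 ⟨mem_Icc.2 (hw' 0), Fintype.mem_piFinset.2 fun j ↦ mem_range.2 ?_⟩
    have := hw' j.succ
    simp only [ψ]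
    omega
  calc ∑ w ∈ M, ∏ j : Fin k, q (w j.succ - w j.castSucc) = ∑ z ∈ M.image ψ, ∏ j, q (z.2 j) :=
        (sum_image (f := fun z ↦ ∏ j, q (z.2 j)) hinj).symm
    _ ≤ ∑ z ∈ Icc 1 n ×ˢ Fintype.piFinset (fun _ ↦ range (n + 1)), ∏ j, q (z.2 j) :=
        sum_le_sum_of_subset_of_nonneg hmaps fun z _ _ ↦ prod_nonneg fun j _ ↦ hq _
    _ = n * (∑ u ∈ range (n + 1), q u) ^ k := by
        rw [sum_product]
        dsimp only
        rw [sum_const, ← prod_univ_sum, prod_const, card_univ, Fintype.card_fin,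
          Nat.card_Icc, nsmul_eq_mul, Nat.add_sub_cancel]

section RandomWalk

variable {Ω E : Type*} [AddCommGroup E] [MeasurableSpace E] [MeasurableAdd₂ E] {X : ℕ → Ω → E}

lemma measurable_iSup_comap_sum {s : Set ℕ} {t : Finset ℕ} (hts : ↑t ⊆ s) :
    Measurable[⨆ i ∈ s, MeasurableSpace.comap (X i) ‹_›] fun ω ↦ ∑ i ∈ t, X i ω :=
  Finset.measurable_sum t fun i hi ↦ (comap_measurable (X i)).mono
    (le_iSup₂ (f := fun i _ ↦ MeasurableSpace.comap (X i) _) i (hts hi)) le_rfl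

variable [MeasurableSpace Ω] {P : Measure Ω}

lemma identDistrib_sum_Ico (hmeas : ∀ i, Measurable (X i)) (hindep : iIndepFun X P)
    (hident : ∀ i, Measure.map (X i) P = Measure.map (X 0) P) (a b : ℕ) :
    IdentDistrib (fun ω ↦ ∑ i ∈ Ico a b, X i ω) (fun ω ↦ ∑ i ∈ range (b - a), X i ω) P P := by
  have hshift : IdentDistrib (fun ω i ↦ X (a + i) ω) (fun ω i ↦ X i ω) P P :=
    .pi (fun i ↦ ⟨(hmeas _).aemeasurable, (hmeas i).aemeasurable, (hident _).trans (hident i).symm⟩)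
      (hindep.precomp (add_right_injective a)) hindep
  simpa [Function.comp_def, Finset.sum_Ico_eq_sum_range] using
    hshift.comp (u := fun v : ℕ → E ↦ ∑ i ∈ range (b - a), v i)
      (Finset.measurable_sum _ fun i _ ↦ measurable_pi_apply i)

lemma measure_forall_sum_Ico_eq_zero [IsProbabilityMeasure P] [MeasurableSingletonClass E]
    (hmeas : ∀ i, Measurable (X i)) (hindep : iIndepFun X P)
    (hident : ∀ i, Measure.map (X i) P = Measure.map (X 0) P) :
    ∀ {k : ℕ} (w : Fin (k + 1) → ℕ), Monotone w →
    P {ω | ∀ j : Fin k, ∑ i ∈ Ico (w j.castSucc) (w j.succ), X i ω = 0}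
      = ∏ j : Fin k, P {ω | ∑ i ∈ range (w j.succ - w j.castSucc), X i ω = 0}
  | 0, _, _ => by simp
  | k + 1, w, hw => by
    set c := w (Fin.last k).castSucc
    -- the last block only involves the `X i` with `c ≤ i`, the others those with `i < c`
    have hind := indep_iSup_of_disjoint (fun i ↦ (hmeas i).comap_le) hindep.iIndep
      (S := Set.Iio c) (T := Set.Ici c) (Set.Iio_disjoint_Ici le_rfl)
    have hinit : MeasurableSet[⨆ i ∈ Set.Iio c, MeasurableSpace.comap (X i) ‹_›]
        {ω | ∀ j : Fin k, ∑ i ∈ Ico (w j.castSucc.castSucc) (w j.castSucc.succ), X i ω = 0} := by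
      simp only [Set.ofPred_forall]
      refine MeasurableSet.iInter fun j ↦ measurable_iSup_comap_sum ?_ (measurableSet_singleton 0)
      intro i hi
      simp only [coe_Ico, Set.mem_Ico] at hi
      exact hi.2.trans_le (hw (by simp [Fin.le_def]))
    have hlast : MeasurableSet[⨆ i ∈ Set.Ici c, MeasurableSpace.comap (X i) ‹_›]
        {ω | ∑ i ∈ Ico c (w (Fin.last k).succ), X i ω = 0} :=
      measurable_iSup_comap_sum (fun i hi ↦ (Finset.mem_Ico.1 hi).1) (measurableSet_singleton 0)
    have hIH := measure_forall_sum_Ico_eq_zero hmeas hindep hident (w ∘ Fin.castSucc)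
      (hw.comp Fin.strictMono_castSucc.monotone)
    simp only [Function.comp_apply, ← Fin.succ_castSucc] at hIH
    have hlaw : P {ω | ∑ i ∈ Ico c (w (Fin.last k).succ), X i ω = 0}
        = P {ω | ∑ i ∈ range (w (Fin.last k).succ - c), X i ω = 0} :=
      (identDistrib_sum_Ico hmeas hindep hident _ _).measure_mem_eq (measurableSet_singleton 0)
    rw [Fin.prod_univ_castSucc, ← hIH, ← hlaw, ← (Indep_iff _ _ _).1 hind _ _ hinit hlast]
    congr 1
    ext ω
    simp [Fin.forall_fin_succ', c]

variable {S : ℕ → Ω → E}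

lemma measure_forall_walk_eq_walk_zero [IsProbabilityMeasure P] [MeasurableSingletonClass E]
    (hmeas : ∀ i, Measurable (X i)) (hindep : iIndepFun X P)
    (hident : ∀ i, Measure.map (X i) P = Measure.map (X 0) P)
    (hS : ∀ n ω, S n ω = ∑ i ∈ range n, X i ω) {k : ℕ} (w : Fin (k + 1) → ℕ) (hw : Monotone w) :
    P {ω | ∀ m, S (w m) ω = S (w 0) ω}
      = ∏ j : Fin k, P {ω | S (w j.succ - w j.castSucc) ω = 0} := by
  have hincr : ∀ j : Fin k, ∀ ω,
      S (w j.succ) ω = S (w j.castSucc) ω ↔ ∑ i ∈ Ico (w j.castSucc) (w j.succ), X i ω = 0 := by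
    intro j ω
    rw [hS, hS, sum_Ico_eq_sub _ (hw (Fin.castSucc_le_succ j)), sub_eq_zero]
  have hevent : {ω | ∀ m, S (w m) ω = S (w 0) ω}
      = {ω | ∀ j : Fin k, ∑ i ∈ Ico (w j.castSucc) (w j.succ), X i ω = 0} := by
    ext ω
    simp only [Set.mem_ofPred_eq, forall_apply_eq_apply_zero_iff (g := fun m ↦ S (w m) ω), hincr]
  rw [hevent, measure_forall_sum_Ico_eq_zero hmeas hindep hident w hw]
  simp only [hS]

theorem integral_tsum_occupation_pow_le [IsProbabilityMeasure P] [MeasurableSingletonClass E]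
    [MeasurableEq E] [DecidableEq E]
    (hmeas : ∀ i, Measurable (X i)) (hindep : iIndepFun X P)
    (hident : ∀ i, Measure.map (X i) P = Measure.map (X 0) P)
    (hS : ∀ n ω, S n ω = ∑ i ∈ range n, X i ω) (n k : ℕ) :
    ∫ ω, ∑' x, (∑ i ∈ Icc 1 n, if S i ω = x then (1 : ℝ) else 0) ^ (k + 1) ∂P
      ≤ (k + 1) ^ (k + 1) * n * (∑ u ∈ range (n + 1), P.real {ω | S u ω = 0}) ^ k := by
  have hSmeas : ∀ i, Measurable (S i) := fun i ↦ by
    rw [show S i = _ from funext (hS i)]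
    exact Finset.measurable_sum _ fun j _ ↦ hmeas j
  have hprod : ∀ w ∈ (Fintype.piFinset fun _ ↦ Icc 1 n).filter Monotone,
      P.real {ω | ∀ m, S (w m) ω = S (w 0) ω}
        = ∏ j : Fin k, P.real {ω | S (w j.succ - w j.castSucc) ω = 0} := fun w hw ↦ by
    simp only [measureReal_def, ENNReal.toReal_prod,
      measure_forall_walk_eq_walk_zero hmeas hindep hident hS w (mem_filter.1 hw).2]
  rw [integral_tsum_sum_ite_pow_eq hSmeas]
  calc ∑ v ∈ Fintype.piFinset fun _ ↦ Icc 1 n, P.real {ω | ∀ m, S (v m) ω = S (v 0) ω}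
      ≤ (k + 1 : ℕ) ^ (k + 1) * ∑ w ∈ (Fintype.piFinset fun _ ↦ Icc 1 n).filter Monotone,
          P.real {ω | ∀ m, S (w m) ω = S (w 0) ω} :=
        sum_piFinset_le_pow_mul_sum_monotone _ _ (fun _ ↦ measureReal_nonneg) fun v σ ↦ by
          congr 1
          ext ω
          exact forall_apply_perm_eq_apply_perm_zero_iff (fun m ↦ S (v m) ω) σ
    _ = (k + 1 : ℕ) ^ (k + 1) * ∑ w ∈ (Fintype.piFinset fun _ ↦ Icc 1 n).filter Monotone,
          ∏ j : Fin k, P.real {ω | S (w j.succ - w j.castSucc) ω = 0} := by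
        rw [sum_congr rfl hprod]
    _ ≤ (k + 1 : ℕ) ^ (k + 1) * (n * (∑ u ∈ range (n + 1), P.real {ω | S u ω = 0}) ^ k) := by
        gcongr
        exact sum_monotone_prod_sub_le n k (fun u ↦ P.real {ω | S u ω = 0})
          fun _ ↦ measureReal_nonneg
    _ = _ := by push_cast; ring

end RandomWalk

lemma sum_range_measureReal_walk_eq_zero_le {Ω E : Type*} [MeasurableSpace Ω] [Zero E]
    {P : Measure Ω} [IsProbabilityMeasure P] {S : ℕ → Ω → E} (hS0 : ∀ ω, S 0 ω = 0)
    (htrans : ∑' n : ℕ, P {ω | S (n + 1) ω = 0} ≠ ⊤) (n : ℕ) :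
    ∑ u ∈ range (n + 1), P.real {ω | S u ω = 0}
      ≤ 1 + (∑' n : ℕ, P {ω | S (n + 1) ω = 0}).toReal := by
  rw [sum_range_succ', add_comm]
  gcongr
  · simp [hS0]
  · simp only [measureReal_def]
    rw [← ENNReal.toReal_sum fun _ _ ↦ measure_ne_top _ _]
    exact ENNReal.toReal_mono htrans (ENNReal.sum_le_tsum _)

theorem stmt_0_general
    {Ω : Type*} [MeasurableSpace Ω] (P : Measure Ω) [IsProbabilityMeasure P]
    (d : ℕ)
    (X : ℕ → Ω → (Fin d → ℤ))
    (hmeas : ∀ i, Measurable (X i))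
    (hindep : iIndepFun X P)
    (hident : ∀ i, Measure.map (X i) P = Measure.map (X 0) P)
    (S : ℕ → Ω → (Fin d → ℤ))
    (hS : ∀ n ω, S n ω = ∑ i ∈ Finset.range n, X i ω)
    (htrans : ∑' n : ℕ, P {ω | S (n + 1) ω = 0} < ⊤)
    (N : ℕ → (Fin d → ℤ) → Ω → ℝ)
    (hN : ∀ n x ω, N n x ω = ∑ i ∈ Finset.Icc 1 n, if S i ω = x then (1 : ℝ) else 0)
 :
    ∃ C > 0, ∀ n : ℕ, 1 ≤ n →
      ∫ ω, (∑' x : Fin d → ℤ, (N n x ω) ^ 4) ∂P ≤ C * n := by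
  set G := (∑' n : ℕ, P {ω | S (n + 1) ω = 0}).toReal
  refine ⟨4 ^ 4 * (1 + G) ^ 3, by positivity, fun n _ ↦ ?_⟩
  simp only [hN]
  refine (integral_tsum_occupation_pow_le hmeas hindep hident hS n 3).trans ?_
  calc _ ≤ ((3 : ℕ) + 1 : ℝ) ^ (3 + 1) * n * (1 + G) ^ 3 := by
        gcongr
        exact sum_range_measureReal_walk_eq_zero_le (fun ω ↦ by simp [hS]) htrans.ne n
    _ = 4 ^ 4 * (1 + G) ^ 3 * n := by ring

theorem stmt_0
    {Ω : Type*} [MeasurableSpace Ω] (P : Measure Ω) [IsProbabilityMeasure P]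
    (d : ℕ) (hd : 1 ≤ d)
    (X : ℕ → Ω → (Fin d → ℤ))
    (hmeas : ∀ i, Measurable (X i))
    (hindep : iIndepFun X P)
    (hident : ∀ i, Measure.map (X i) P = Measure.map (X 0) P)
    (S : ℕ → Ω → (Fin d → ℤ))
    (hS : ∀ n ω, S n ω = ∑ i ∈ Finset.range n, X i ω)
    (htrans : ∑' n : ℕ, P {ω | S (n + 1) ω = 0} < ⊤)
    (N : ℕ → (Fin d → ℤ) → Ω → ℝ)
    (hN : ∀ n x ω, N n x ω = ∑ i ∈ Finset.Icc 1 n, if S i ω = x then (1 : ℝ) else 0)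
 :
    ∃ C > 0, ∀ n : ℕ, 1 ≤ n →
      ∫ ω, (∑' x : Fin d → ℤ, (N n x ω) ^ 4) ∂P ≤ C * n :=
  stmt_0_general P d X hmeas hindep hident S hS htrans N hN
end

section
/- There exists a constant C > 0 such that for every n ≥ 1, E[(∑_{x∈ℤ^d} N_n(x)^2)^2] ≤ C·n^2, where N_n(x) is the occupation time of the transient random walk (S_n). -/
/-!
Expanding the square, `∑ₓ Nₙ(x)² = ∑_{i,j ≤ n} 1{Sᵢ = Sⱼ} = n + 2 ∑ᵢ Tᵢ` with
`Tᵢ = #{j ∈ (i, n] | Sⱼ = Sᵢ}`, so by Cauchy–Schwarz its square is at most `2n² + 8n ∑ᵢ Tᵢ²`.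
For `i ≤ j ≤ l` the events `Sⱼ = Sᵢ` and `Sₗ = Sⱼ` only involve the disjoint blocks of increments
`X_{[i,j)}` and `X_{[j,l)}`, so `P(Sⱼ = Sᵢ, Sₗ = Sᵢ) = P(S_{j-i} = 0) P(S_{l-j} = 0)`. Hence
`E[Tᵢ²] ≤ 2 (∑ₖ P(Sₖ = 0))²`, which is finite by transience.
-/

open MeasureTheory ProbabilityTheory Finset

namespace Finset

variable {α R : Type*} [LinearOrder α] [CommSemiring R] {F : α → α → R}

lemma sum_sum_eq_sum_add_two_mul_sum_sum_filter_lt (hF : ∀ i j, F i j = F j i) (s : Finset α) :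
    ∑ i ∈ s, ∑ j ∈ s, F i j = ∑ i ∈ s, F i i + 2 * ∑ i ∈ s, ∑ j ∈ s with i < j, F i j := by
  have hsplit (i j : α) : F i j =
      (if i = j then F i i else 0) + (if i < j then F i j else 0) +
        (if j < i then F i j else 0) := by
    rcases lt_trichotomy i j with h | rfl | h
    · simp [h, h.ne, h.not_gt]
    · simp
    · simp [h, h.ne', h.not_gt]
  have hlower : ∑ i ∈ s, ∑ j ∈ s, (if j < i then F i j else 0) =
      ∑ i ∈ s, ∑ j ∈ s, (if i < j then F i j else 0) := by
    rw [sum_comm]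
    simp_rw [hF]
  simp_rw [sum_filter]
  conv_lhs => enter [2, i, 2, j]; rw [hsplit i j]
  simp only [sum_add_distrib, hlower, sum_ite_eq, sum_ite_mem, inter_self]
  ring

lemma sum_sum_le_two_mul_sum_sum_filter_le [PartialOrder R] [IsOrderedRing R]
    (hF : ∀ i j, F i j = F j i) (hF0 : ∀ i j, 0 ≤ F i j) (s : Finset α) :
    ∑ i ∈ s, ∑ j ∈ s, F i j ≤ 2 * ∑ i ∈ s, ∑ j ∈ s with i ≤ j, F i j := by
  have hsplit (i j : α) :
      F i j ≤ (if i ≤ j then F i j else 0) + (if j ≤ i then F i j else 0) := by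
    have hite (p : Prop) [Decidable p] : 0 ≤ if p then F i j else 0 := by
      split_ifs
      exacts [hF0 i j, le_rfl]
    rcases le_total i j with h | h
    · rw [if_pos h]; exact le_add_of_nonneg_right (hite _)
    · rw [if_pos h]; exact le_add_of_nonneg_left (hite _)
  have hupper : ∑ i ∈ s, ∑ j ∈ s, (if j ≤ i then F i j else 0) =
      ∑ i ∈ s, ∑ j ∈ s, (if i ≤ j then F i j else 0) := by
    rw [sum_comm]
    simp_rw [hF]
  calc ∑ i ∈ s, ∑ j ∈ s, F i j
      ≤ ∑ i ∈ s, ∑ j ∈ s, ((if i ≤ j then F i j else 0) + (if j ≤ i then F i j else 0)) :=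
        sum_le_sum fun i _ => sum_le_sum fun j _ => hsplit i j
    _ = 2 * ∑ i ∈ s, ∑ j ∈ s with i ≤ j, F i j := by
        simp only [sum_add_distrib, hupper, sum_filter]; ring

end Finset

lemma tsum_sq_sum_ite_eq {α : Type*} [DecidableEq α] (s : ℕ → α) (I : Finset ℕ) :
    ∑' x, (∑ i ∈ I, if s i = x then (1 : ℝ) else 0) ^ 2 =
      ∑ i ∈ I, ∑ j ∈ I, if s j = s i then (1 : ℝ) else 0 := by
  have hsupp : ∀ x ∉ I.image s, (∑ i ∈ I, if s i = x then (1 : ℝ) else 0) ^ 2 = 0 := by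
    intro x hx
    rw [sum_eq_zero fun i hi => if_neg fun h => hx (mem_image.2 ⟨i, hi, h⟩)]
    simp
  rw [tsum_eq_sum hsupp]
  simp_rw [sq, sum_mul_sum, ite_zero_mul_ite_zero, mul_one]
  rw [sum_comm]
  refine sum_congr rfl fun i hi => ?_
  rw [sum_comm]
  refine sum_congr rfl fun j _ => ?_
  rw [sum_congr rfl fun x _ => ite_and .., sum_ite_eq, if_pos (mem_image_of_mem s hi)]

lemma sq_sum_ite_eq_eq_sum_sum_indicator {Ω α : Type*} [DecidableEq α] (S : ℕ → Ω → α) (i : ℕ)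
    (J : Finset ℕ) :
    (fun ω => (∑ j ∈ J, if S j ω = S i ω then (1 : ℝ) else 0) ^ 2) =
      fun ω => ∑ j ∈ J, ∑ l ∈ J, ({ω | S j ω = S i ω} ∩ {ω | S l ω = S i ω}).indicator 1 ω := by
  ext ω
  simp only [sq, sum_mul_sum, ite_zero_mul_ite_zero, mul_one]
  simp [Set.indicator_apply]

lemma sum_comp_sub_le_tsum {p : ℕ → ℝ} (hp0 : 0 ≤ p) (hp : Summable p) {s : Finset ℕ} {c : ℕ}
    (hc : ∀ j ∈ s, c ≤ j) : ∑ j ∈ s, p (j - c) ≤ ∑' k, p k := by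
  have hinj : Set.InjOn (· - c) s := fun a ha b hb h => by
    have := hc a ha; have := hc b hb; simp only at h; omega
  rw [← sum_image hinj]
  exact hp.sum_le_tsum _ fun k _ => hp0 k

lemma sum_sum_filter_le_mul_sub_le_sq_tsum {p : ℕ → ℝ} (hp0 : 0 ≤ p) (hp : Summable p)
    {s : Finset ℕ} {c : ℕ} (hc : ∀ j ∈ s, c ≤ j) :
    ∑ j ∈ s, ∑ l ∈ s with j ≤ l, p (j - c) * p (l - j) ≤ (∑' k, p k) ^ 2 :=
  calc ∑ j ∈ s, ∑ l ∈ s with j ≤ l, p (j - c) * p (l - j)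
      ≤ ∑ j ∈ s, p (j - c) * ∑' k, p k := sum_le_sum fun j _ => by
        rw [← mul_sum]
        exact mul_le_mul_of_nonneg_left
          (sum_comp_sub_le_tsum hp0 hp fun l hl => (mem_filter.1 hl).2) (hp0 _)
    _ ≤ (∑' k, p k) ^ 2 := by
        rw [← sum_mul, sq]
        exact mul_le_mul_of_nonneg_right (sum_comp_sub_le_tsum hp0 hp hc) (tsum_nonneg hp0)

lemma integral_sq_add_two_mul_sum_le {Ω ι : Type*} [MeasurableSpace Ω] {P : Measure Ω}
    [IsProbabilityMeasure P] (c : ℝ) {T : ι → Ω → ℝ} {I : Finset ι}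
    (hT : ∀ i ∈ I, Integrable (fun ω => T i ω ^ 2) P) :
    ∫ ω, (c + 2 * ∑ i ∈ I, T i ω) ^ 2 ∂P ≤ 2 * c ^ 2 + 8 * #I * ∑ i ∈ I, ∫ ω, T i ω ^ 2 ∂P := by
  have hpt (ω : Ω) : (c + 2 * ∑ i ∈ I, T i ω) ^ 2 ≤ 2 * c ^ 2 + 8 * #I * ∑ i ∈ I, T i ω ^ 2 := by
    nlinarith [sq_sum_le_card_mul_sum_sq (s := I) (f := fun i => T i ω),
      sq_nonneg (c - 2 * ∑ i ∈ I, T i ω)]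
  have hint : Integrable (fun ω => 2 * c ^ 2 + 8 * #I * ∑ i ∈ I, T i ω ^ 2) P :=
    (integrable_const _).add ((integrable_finsetSum I hT).const_mul _)
  calc ∫ ω, (c + 2 * ∑ i ∈ I, T i ω) ^ 2 ∂P
      ≤ ∫ ω, (2 * c ^ 2 + 8 * #I * ∑ i ∈ I, T i ω ^ 2) ∂P :=
        integral_mono_of_nonneg (ae_of_all _ fun ω => sq_nonneg _) hint (ae_of_all _ hpt)
    _ = 2 * c ^ 2 + 8 * #I * ∑ i ∈ I, ∫ ω, T i ω ^ 2 ∂P := by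
        rw [integral_add (integrable_const _) ((integrable_finsetSum I hT).const_mul _),
          integral_const, integral_const_mul, integral_finsetSum I hT]
        simp

namespace ProbabilityTheory

variable {Ω G : Type*} [MeasurableSpace Ω] {P : Measure Ω}
  [AddCommMonoid G] [MeasurableSpace G] [MeasurableAdd₂ G] {X : ℕ → Ω → G}

lemma iIndepFun.indepFun_finsetSum_of_disjoint (hindep : iIndepFun X P)
    (hmeas : ∀ i, Measurable (X i)) {s t : Finset ℕ} (hst : Disjoint s t) :
    IndepFun (fun ω => ∑ i ∈ s, X i ω) (fun ω => ∑ i ∈ t, X i ω) P := by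
  have hsum (u : Finset ℕ) : Measurable fun v : u → G => ∑ i, v i :=
    measurable_sum _ fun i _ => measurable_pi_apply i
  have hcomp (u : Finset ℕ) :
      (fun v : u → G => ∑ i, v i) ∘ (fun ω (i : u) => X i ω) = fun ω => ∑ i ∈ u, X i ω :=
    funext fun ω => sum_attach u fun i => X i ω
  simpa only [hcomp] using (hindep.indepFun_finset s t hst hmeas).comp (hsum s) (hsum t)

variable [IsProbabilityMeasure P]

lemma iIndepFun.identDistrib_sum_range_add (hindep : iIndepFun X P)
    (hmeas : ∀ i, Measurable (X i)) (hident : ∀ i, P.map (X i) = P.map (X 0)) (a m : ℕ) :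
    IdentDistrib (fun ω => ∑ k ∈ range m, X (a + k) ω) (fun ω => ∑ k ∈ range m, X k ω) P P := by
  have hlaw (b : ℕ) :
      P.map (fun ω (k : Fin m) => X (b + k) ω) = Measure.pi fun _ => P.map (X 0) := by
    rw [(iIndepFun_iff_map_fun_eq_pi_map fun k => (hmeas _).aemeasurable).1
      (hindep.precomp fun k l hkl => Fin.ext (by simpa using hkl))]
    simp only [hident]
  have htuple : IdentDistrib (fun ω (k : Fin m) => X (a + k) ω)
      (fun ω (k : Fin m) => X (0 + k) ω) P P :=
    ⟨by fun_prop, by fun_prop, by rw [hlaw, hlaw]⟩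
  simpa [Function.comp_def, sum_range] using
    htuple.comp (u := fun v : Fin m → G => ∑ k, v k)
      (measurable_sum _ fun k _ => measurable_pi_apply k)

lemma iIndepFun.measure_sum_Ico_mem_inter (hindep : iIndepFun X P)
    (hmeas : ∀ i, Measurable (X i)) (hident : ∀ i, P.map (X i) = P.map (X 0)) (i j l : ℕ)
    {A B : Set G} (hA : MeasurableSet A) (hB : MeasurableSet B) :
    P ((fun ω => ∑ k ∈ Ico i j, X k ω) ⁻¹' A ∩ (fun ω => ∑ k ∈ Ico j l, X k ω) ⁻¹' B) =
      P ((fun ω => ∑ k ∈ range (j - i), X k ω) ⁻¹' A) *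
        P ((fun ω => ∑ k ∈ range (l - j), X k ω) ⁻¹' B) := by
  have hlaw (a b : ℕ) : IdentDistrib (fun ω => ∑ k ∈ Ico a b, X k ω)
      (fun ω => ∑ k ∈ range (b - a), X k ω) P P := by
    simpa only [sum_Ico_eq_sum_range] using
      hindep.identDistrib_sum_range_add hmeas hident a (b - a)
  have hblocks := hindep.indepFun_finsetSum_of_disjoint hmeas (Ico_disjoint_Ico_consecutive i j l)
  rw [hblocks.measure_inter_preimage_eq_mul _ _ hA hB, (hlaw i j).measure_mem_eq hA,
    (hlaw j l).measure_mem_eq hB]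

end ProbabilityTheory

lemma setOf_sum_range_eq_eq_preimage_sum_Ico {Ω G : Type*} [AddCommGroup G] (X : ℕ → Ω → G)
    {i j : ℕ} (hij : i ≤ j) :
    {ω | ∑ k ∈ range j, X k ω = ∑ k ∈ range i, X k ω} =
      (fun ω => ∑ k ∈ Ico i j, X k ω) ⁻¹' {0} := by
  ext ω
  simp [← sum_range_add_sum_Ico _ hij]

section RandomWalk

variable {Ω G : Type*} [MeasurableSpace Ω] {P : Measure Ω} [IsProbabilityMeasure P]
  [AddCommGroup G] [MeasurableSpace G] [MeasurableAdd₂ G] [MeasurableSingletonClass G]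
  {X : ℕ → Ω → G} {S : ℕ → Ω → G}

lemma measurableSet_setOf_eq (hmeas : ∀ i, Measurable (X i))
    (hS : ∀ n ω, S n ω = ∑ k ∈ range n, X k ω) {i j : ℕ} (hij : i ≤ j) :
    MeasurableSet {ω | S j ω = S i ω} := by
  simp only [hS, setOf_sum_range_eq_eq_preimage_sum_Ico X hij]
  exact (measurable_sum _ fun k _ => hmeas k) (measurableSet_singleton 0)

lemma measureReal_setOf_eq_inter_eq (hindep : iIndepFun X P) (hmeas : ∀ i, Measurable (X i))
    (hident : ∀ i, P.map (X i) = P.map (X 0)) (hS : ∀ n ω, S n ω = ∑ k ∈ range n, X k ω)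
    {i j l : ℕ} (hij : i ≤ j) (hjl : j ≤ l) :
    P.real ({ω | S j ω = S i ω} ∩ {ω | S l ω = S i ω}) =
      P.real {ω | S (j - i) ω = 0} * P.real {ω | S (l - j) ω = 0} := by
  have hevent : {ω | S j ω = S i ω} ∩ {ω | S l ω = S i ω} =
      {ω | S j ω = S i ω} ∩ {ω | S l ω = S j ω} := by
    ext ω
    exact and_congr_right fun (h : S j ω = S i ω) =>
      show S l ω = S i ω ↔ S l ω = S j ω by rw [h]
  have hreturn (m : ℕ) : {ω | S m ω = 0} = (fun ω => ∑ k ∈ range m, X k ω) ⁻¹' {0} := by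
    ext ω; simp [hS]
  rw [hevent, hreturn, hreturn]
  simp only [hS, setOf_sum_range_eq_eq_preimage_sum_Ico X hij,
    setOf_sum_range_eq_eq_preimage_sum_Ico X hjl, measureReal_def,
    hindep.measure_sum_Ico_mem_inter hmeas hident i j l (measurableSet_singleton 0)
      (measurableSet_singleton 0), ENNReal.toReal_mul]

lemma integrable_sq_sum_ite_eq [DecidableEq G] (hmeas : ∀ i, Measurable (X i))
    (hS : ∀ n ω, S n ω = ∑ k ∈ range n, X k ω) {i : ℕ} {J : Finset ℕ} (hJ : ∀ j ∈ J, i ≤ j) :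
    Integrable (fun ω => (∑ j ∈ J, if S j ω = S i ω then (1 : ℝ) else 0) ^ 2) P := by
  rw [sq_sum_ite_eq_eq_sum_sum_indicator]
  exact integrable_finsetSum _ fun j hj => integrable_finsetSum _ fun l hl =>
    (integrable_const 1).indicator ((measurableSet_setOf_eq hmeas hS (hJ j hj)).inter
      (measurableSet_setOf_eq hmeas hS (hJ l hl)))

lemma integral_sq_sum_ite_eq_le [DecidableEq G] (hindep : iIndepFun X P)
    (hmeas : ∀ i, Measurable (X i)) (hident : ∀ i, P.map (X i) = P.map (X 0))
    (hS : ∀ n ω, S n ω = ∑ k ∈ range n, X k ω)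
    (hp : Summable fun k => P.real {ω | S k ω = 0}) {i : ℕ} {J : Finset ℕ}
    (hJ : ∀ j ∈ J, i ≤ j) :
    ∫ ω, (∑ j ∈ J, if S j ω = S i ω then (1 : ℝ) else 0) ^ 2 ∂P ≤
      2 * (∑' k, P.real {ω | S k ω = 0}) ^ 2 := by
  set F : ℕ → ℕ → ℝ := fun j l => P.real ({ω | S j ω = S i ω} ∩ {ω | S l ω = S i ω})
  have hmeasF {j l : ℕ} (hj : j ∈ J) (hl : l ∈ J) :
      MeasurableSet ({ω | S j ω = S i ω} ∩ {ω | S l ω = S i ω}) :=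
    (measurableSet_setOf_eq hmeas hS (hJ j hj)).inter (measurableSet_setOf_eq hmeas hS (hJ l hl))
  have hexpand : ∫ ω, (∑ j ∈ J, if S j ω = S i ω then (1 : ℝ) else 0) ^ 2 ∂P =
      ∑ j ∈ J, ∑ l ∈ J, F j l := by
    rw [sq_sum_ite_eq_eq_sum_sum_indicator, integral_finsetSum _ fun j hj =>
      integrable_finsetSum _ fun l hl => (integrable_const 1).indicator (hmeasF hj hl)]
    refine sum_congr rfl fun j hj => ?_
    rw [integral_finsetSum _ fun l hl => (integrable_const 1).indicator (hmeasF hj hl)]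
    exact sum_congr rfl fun l hl => integral_indicator_one (hmeasF hj hl)
  have hordered : ∀ j ∈ J, ∑ l ∈ J with j ≤ l, F j l =
      ∑ l ∈ J with j ≤ l, P.real {ω | S (j - i) ω = 0} * P.real {ω | S (l - j) ω = 0} :=
    fun j hj => sum_congr rfl fun l hl =>
      measureReal_setOf_eq_inter_eq hindep hmeas hident hS (hJ j hj) (mem_filter.1 hl).2
  calc ∫ ω, (∑ j ∈ J, if S j ω = S i ω then (1 : ℝ) else 0) ^ 2 ∂P
      = ∑ j ∈ J, ∑ l ∈ J, F j l := hexpand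
    _ ≤ 2 * ∑ j ∈ J, ∑ l ∈ J with j ≤ l, F j l :=
        sum_sum_le_two_mul_sum_sum_filter_le (fun j l => by simp only [Set.inter_comm])
          (fun j l => measureReal_nonneg) J
    _ ≤ 2 * (∑' k, P.real {ω | S k ω = 0}) ^ 2 := by
        rw [sum_congr rfl hordered]
        gcongr
        exact sum_sum_filter_le_mul_sub_le_sq_tsum (fun k => measureReal_nonneg) hp hJ

end RandomWalk

theorem stmt_1_general
    {Ω : Type*} [MeasurableSpace Ω] (P : Measure Ω) [IsProbabilityMeasure P]
    (d : ℕ)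
    (X : ℕ → Ω → (Fin d → ℤ))
    (hmeas : ∀ i, Measurable (X i))
    (hindep : iIndepFun X P)
    (hident : ∀ i, Measure.map (X i) P = Measure.map (X 0) P)
    (S : ℕ → Ω → (Fin d → ℤ))
    (hS : ∀ n ω, S n ω = ∑ i ∈ Finset.range n, X i ω)
    (htrans : ∑' n : ℕ, P {ω | S (n + 1) ω = 0} < ⊤)
    (N : ℕ → (Fin d → ℤ) → Ω → ℝ)
    (hN : ∀ n x ω, N n x ω = ∑ i ∈ Finset.Icc 1 n, if S i ω = x then (1 : ℝ) else 0)
 :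
    ∃ C > 0, ∀ n : ℕ, 1 ≤ n →
      ∫ ω, (∑' x : Fin d → ℤ, (N n x ω) ^ 2) ^ 2 ∂P ≤ C * (n : ℝ) ^ 2 := by
  have hsummable : Summable fun k => P.real {ω | S k ω = 0} := by
    refine (summable_nat_add_iff 1).1 ?_
    simpa only [measureReal_def] using ENNReal.summable_toReal htrans.ne
  set g := ∑' k, P.real {ω | S k ω = 0}
  refine ⟨2 + 16 * g ^ 2, by positivity, fun n _ => ?_⟩
  set I := Icc 1 n
  set T : ℕ → Ω → ℝ := fun i ω => ∑ j ∈ I with i < j, if S j ω = S i ω then 1 else 0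
  have hcard : (#I : ℝ) = n := by simp [I]
  have hselfint (ω : Ω) : ∑' x, N n x ω ^ 2 = n + 2 * ∑ i ∈ I, T i ω := by
    simp only [hN]
    rw [tsum_sq_sum_ite_eq (S · ω),
      sum_sum_eq_sum_add_two_mul_sum_sum_filter_lt (fun i j => by simp only [eq_comm])]
    simp only [if_true, sum_const, nsmul_one, ← hcard]
    rfl
  have hT (i : ℕ) : ∫ ω, T i ω ^ 2 ∂P ≤ 2 * g ^ 2 :=
    integral_sq_sum_ite_eq_le hindep hmeas hident hS hsummable fun j hj => (mem_filter.1 hj).2.le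
  calc ∫ ω, (∑' x, N n x ω ^ 2) ^ 2 ∂P = ∫ ω, (n + 2 * ∑ i ∈ I, T i ω) ^ 2 ∂P := by
        simp_rw [hselfint]
    _ ≤ 2 * n ^ 2 + 8 * #I * ∑ i ∈ I, ∫ ω, T i ω ^ 2 ∂P :=
        integral_sq_add_two_mul_sum_le _ fun i _ =>
          integrable_sq_sum_ite_eq hmeas hS fun j hj => (mem_filter.1 hj).2.le
    _ ≤ 2 * n ^ 2 + 8 * #I * ∑ i ∈ I, 2 * g ^ 2 := by gcongr with i; exact hT i
    _ = (2 + 16 * g ^ 2) * n ^ 2 := by rw [sum_const, nsmul_eq_mul, hcard]; ring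

theorem stmt_1
    {Ω : Type*} [MeasurableSpace Ω] (P : Measure Ω) [IsProbabilityMeasure P]
    (d : ℕ) (hd : 1 ≤ d)
    (X : ℕ → Ω → (Fin d → ℤ))
    (hmeas : ∀ i, Measurable (X i))
    (hindep : iIndepFun X P)
    (hident : ∀ i, Measure.map (X i) P = Measure.map (X 0) P)
    (S : ℕ → Ω → (Fin d → ℤ))
    (hS : ∀ n ω, S n ω = ∑ i ∈ Finset.range n, X i ω)
    (htrans : ∑' n : ℕ, P {ω | S (n + 1) ω = 0} < ⊤)
    (N : ℕ → (Fin d → ℤ) → Ω → ℝ)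
    (hN : ∀ n x ω, N n x ω = ∑ i ∈ Finset.Icc 1 n, if S i ω = x then (1 : ℝ) else 0)
 :
    ∃ C > 0, ∀ n : ℕ, 1 ≤ n →
      ∫ ω, (∑' x : Fin d → ℤ, (N n x ω) ^ 2) ^ 2 ∂P ≤ C * (n : ℝ) ^ 2 :=
  stmt_1_general P d X hmeas hindep hident S hS htrans N hN
end

section
/- For every pair of reals 0 ≤ a < b, almost surely (1/n)·∑_{k=0}^{⌊an⌋} ∑_{l=⌊an⌋+1}^{⌊bn⌋} 1_{{S_k = S_l}} → 0 as n → ∞, where (S_n) is a transient random walk on ℤ^d. -/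
/-!
With `A = ⌊a n⌋` and `B = ⌊b n⌋`, sort the pairs `k ≤ A < l` with `S k = S l` by their
lag `m = l - k`. At most `M²` of them have lag `m < M`. For fixed `k`, those of lag `m ≥ M` are
returns to the origin, at times in `[M, B]`, of the walk restarted at time `k`; summed over `k ≤ A`
they form a Birkhoff sum, over `A + 1` steps, of `returnCount M (B + 1)` under the shift of the
i.i.d. increment sequence. The shift preserves the law of that sequence, so by the maximal
ergodic inequality, for `c > 0`, all these Birkhoff sums (for every `B`) stay below `(A + 1) c`
outside an event of probability at most `(∑_{m ≥ M} P(S m = 0)) / c`, which transience makes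
arbitrarily small as `M → ∞`. Hence almost surely the count is eventually at most
`M² + (a n + 1) c ≤ ε n`.
-/

open MeasureTheory ProbabilityTheory Filter Finset Topology

section MaximalErgodic

variable {α : Type*} {T : α → α} {f : α → ℝ}

noncomputable def birkhoffMax (T : α → α) (f : α → ℝ) (N : ℕ) (x : α) : ℝ :=
  (range (N + 1)).sup' nonempty_range_add_one fun n => birkhoffSum T f n x

lemma birkhoffSum_le_birkhoffMax {n N : ℕ} (hn : n ≤ N) (x : α) :
    birkhoffSum T f n x ≤ birkhoffMax T f N x :=
  le_sup' (fun n => birkhoffSum T f n x) (mem_range_succ_iff.mpr hn)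

lemma birkhoffMax_nonneg (N : ℕ) (x : α) : 0 ≤ birkhoffMax T f N x :=
  (birkhoffSum_zero T f x).symm.trans_le (birkhoffSum_le_birkhoffMax N.zero_le x)

lemma birkhoffMax_mono (x : α) : Monotone fun N => birkhoffMax T f N x := fun _ _ h =>
  sup'_mono _ (range_subset_range.mpr (Nat.succ_le_succ h)) nonempty_range_add_one

lemma pos_birkhoffMax_iff {N : ℕ} {x : α} :
    0 < birkhoffMax T f N x ↔ ∃ n ≤ N, 0 < birkhoffSum T f n x := by
  simp only [birkhoffMax, lt_sup'_iff, mem_range_succ_iff]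

lemma birkhoffMax_le_add_birkhoffMax_apply {N : ℕ} {x : α} (hx : 0 < birkhoffMax T f N x) :
    birkhoffMax T f N x ≤ f x + birkhoffMax T f N (T x) := by
  obtain ⟨n, hn, hmax⟩ := exists_mem_eq_sup' nonempty_range_add_one
    fun n => birkhoffSum T f n x
  rw [birkhoffMax, hmax] at hx ⊢
  rcases n with _ | m
  · simp at hx
  · rw [birkhoffSum_succ']
    have hm : m ≤ N := by simp only [mem_range] at hn; omega
    exact add_le_add le_rfl (birkhoffSum_le_birkhoffMax hm (T x))

variable [MeasurableSpace α] {μ : Measure α}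

lemma measurable_birkhoffSum (hT : Measurable T) (hf : Measurable f) (n : ℕ) :
    Measurable (birkhoffSum T f n) :=
  measurable_sum _ fun k _ => hf.comp (hT.iterate k)

lemma measurable_birkhoffMax (hT : Measurable T) (hf : Measurable f) (N : ℕ) :
    Measurable (birkhoffMax T f N) :=
  measurable_range_sup'' fun n _ => measurable_birkhoffSum hT hf n

lemma integrable_birkhoffMax (hT : MeasurePreserving T μ μ) (hf : Integrable f μ) (N : ℕ) :
    Integrable (birkhoffMax T f N) μ := by
  have hsum (n : ℕ) : Integrable (birkhoffSum T f n) μ :=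
    integrable_finsetSum _ fun k _ => (hT.iterate k).integrable_comp_of_integrable hf
  have := sup'_induction (s := range (N + 1)) nonempty_range_add_one (fun n => birkhoffSum T f n)
    (p := fun g => Integrable g μ) (fun _ h₁ _ h₂ => h₁.sup h₂) fun n _ => hsum n
  convert this using 1
  ext x
  exact (Finset.sup'_apply _ _ x).symm

/-- **Garsia's lemma**. -/
lemma setIntegral_birkhoffMax_pos_nonneg (hT : MeasurePreserving T μ μ) (hfm : Measurable f)
    (hf : Integrable f μ) (N : ℕ) :
    0 ≤ ∫ x in {x | 0 < birkhoffMax T f N x}, f x ∂μ := by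
  set M := birkhoffMax T f N
  set A := {x | 0 < M x}
  have hA : MeasurableSet A :=
    measurableSet_lt measurable_const (measurable_birkhoffMax hT.measurable hfm N)
  have hM := integrable_birkhoffMax hT hf N
  have hpt (x : α) : M x ≤ A.indicator f x + M (T x) := by
    by_cases hx : x ∈ A
    · rw [Set.indicator_of_mem hx]; exact birkhoffMax_le_add_birkhoffMax_apply hx
    · rw [Set.indicator_of_notMem hx, zero_add]
      exact (not_lt.mp hx).trans (birkhoffMax_nonneg N (T x))
  have hMT : ∫ x, M (T x) ∂μ = ∫ x, M x ∂μ := by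
    have h := integral_map hT.aemeasurable (hT.map_eq.symm ▸ hM.aestronglyMeasurable)
    rwa [hT.map_eq, eq_comm] at h
  have hMT' : Integrable (fun x => M (T x)) μ := hT.integrable_comp_of_integrable hM
  have hle : ∫ x, M x ∂μ ≤ ∫ x in A, f x ∂μ + ∫ x, M x ∂μ := by
    calc ∫ x, M x ∂μ ≤ ∫ x, (A.indicator f x + M (T x)) ∂μ :=
          integral_mono hM ((hf.indicator hA).add hMT') hpt
      _ = ∫ x in A, f x ∂μ + ∫ x, M x ∂μ := by
          rw [integral_add (hf.indicator hA) hMT', integral_indicator hA, hMT]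
  linarith

/-- **Maximal ergodic inequality**. -/
lemma measure_exists_birkhoffSum_gt_le [IsFiniteMeasure μ] (hT : MeasurePreserving T μ μ)
    (hfm : Measurable f) (hf : Integrable f μ) (hf0 : 0 ≤ f) {c : ℝ} (hc : 0 < c) :
    μ {x | ∃ n : ℕ, n * c < birkhoffSum T f n x} ≤ ENNReal.ofReal ((∫ x, f x ∂μ) / c) := by
  set A : ℕ → Set α := fun N => {x | 0 < birkhoffMax T (f - fun _ => c) N x}
  have hsum (n : ℕ) (x : α) :
      birkhoffSum T (f - fun _ => c) n x = birkhoffSum T f n x - n * c := by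
    rw [birkhoffSum_sub, birkhoffSum_of_comp_eq (φ := fun _ => c) rfl, Pi.smul_apply, nsmul_eq_mul]
  have hunion : {x | ∃ n : ℕ, n * c < birkhoffSum T f n x} = ⋃ N, A N := by
    ext x
    simp only [A, Set.mem_iUnion, pos_birkhoffMax_iff, hsum, sub_pos]
    exact ⟨fun ⟨n, hn⟩ => ⟨n, n, le_rfl, hn⟩, fun ⟨_, n, _, hn⟩ => ⟨n, hn⟩⟩
  have hmono : Monotone A := fun _ _ h x hx => hx.trans_le (birkhoffMax_mono x h)
  rw [hunion, hmono.measure_iUnion]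
  refine iSup_le fun N => ?_
  have hgarsia : 0 ≤ ∫ x in A N, (f x - c) ∂μ :=
    setIntegral_birkhoffMax_pos_nonneg hT (hfm.sub measurable_const)
      (hf.sub (integrable_const c)) N
  rw [integral_sub hf.integrableOn (integrable_const c).integrableOn, setIntegral_const,
    smul_eq_mul] at hgarsia
  have hle : c * μ.real (A N) ≤ ∫ x, f x ∂μ := by
    linarith [setIntegral_le_integral (s := A N) hf (ae_of_all _ hf0)]
  rw [← ofReal_measureReal (measure_ne_top μ _)]
  exact ENNReal.ofReal_le_ofReal ((le_div_iff₀' hc).mpr hle)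

end MaximalErgodic

section SeqShift

variable {E : Type*}

def seqShift (y : ℕ → E) (i : ℕ) : E := y (i + 1)

lemma seqShift_iterate_apply (k : ℕ) (y : ℕ → E) (i : ℕ) : seqShift^[k] y i = y (i + k) := by
  induction k generalizing y with
  | zero => rfl
  | succ k ih => rw [Function.iterate_succ_apply, ih, seqShift, add_assoc]

variable [MeasurableSpace E]

lemma measurable_seqShift : Measurable (seqShift : (ℕ → E) → ℕ → E) :=
  measurable_pi_lambda _ fun i => measurable_pi_apply (i + 1)

lemma measurePreserving_seqShift_map {Ω : Type*} [MeasurableSpace Ω] {P : Measure Ω}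
    [IsProbabilityMeasure P] {X : ℕ → Ω → E} (hmeas : ∀ i, Measurable (X i))
    (hindep : iIndepFun X P) (hident : ∀ i, P.map (X i) = P.map (X 0)) :
    MeasurePreserving seqShift (P.map fun ω i => X i ω) (P.map fun ω i => X i ω) := by
  refine ⟨measurable_seqShift, ?_⟩
  rw [Measure.map_map measurable_seqShift (measurable_pi_lambda _ hmeas)]
  have hshift : seqShift ∘ (fun ω i => X i ω) = fun ω i => X (i + 1) ω := rfl
  rw [hshift, (hindep.precomp (add_left_injective 1)).map_fun_eq_infinitePi_map (fun i => hmeas _),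
    hindep.map_fun_eq_infinitePi_map hmeas]
  simp only [hident]

end SeqShift

noncomputable def coincidenceCount {β : Type*} [DecidableEq β] (s : ℕ → β) (A B : ℕ) : ℝ :=
  ∑ k ∈ range (A + 1), ∑ l ∈ Icc (A + 1) B, if s k = s l then 1 else 0

/-- Pairs `k ≤ A < l` at distance less than `M` fit in an `M × M` square. -/
lemma sum_card_filter_lt_add_le (A B M : ℕ) :
    ∑ k ∈ range (A + 1), #((Icc (A + 1) B).filter (· < k + M)) ≤ M * M := by
  calc ∑ k ∈ range (A + 1), #((Icc (A + 1) B).filter (· < k + M))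
      = #((range (A + 1) ×ˢ Icc (A + 1) B).filter fun p => p.2 < p.1 + M) := by
        simp only [card_filter, sum_product]
    _ ≤ #(range M ×ˢ range M) := by
        refine card_le_card_of_injOn (fun p => (A - p.1, p.2 - (A + 1))) ?_ ?_
        · intro p hp
          simp only [coe_filter, mem_product, mem_range, mem_Icc] at hp
          obtain ⟨⟨h1, h2, -⟩, h3⟩ := hp
          simp only [coe_product, coe_range, Set.mem_prod, Set.mem_Iio]
          omega
        · intro p hp q hq h
          simp only [coe_filter, mem_product, mem_range, mem_Icc] at hp hq
          obtain ⟨⟨hp1, hp2, -⟩, hp3⟩ := hp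
          obtain ⟨⟨hq1, hq2, -⟩, hq3⟩ := hq
          simp only [Prod.mk.injEq] at h
          ext <;> omega
    _ = M * M := by rw [card_product, card_range]

lemma tendsto_div_natCast_of_forall_eventually_le {u : ℕ → ℝ} (hu : ∀ n, 0 ≤ u n)
    (h : ∀ j : ℕ, ∀ᶠ n in atTop, u n ≤ 1 / (j + 1) * n) :
    Tendsto (fun n => u n / n) atTop (𝓝 0) := by
  refine tendsto_order.mpr ⟨fun b hb => Eventually.of_forall fun n =>
    hb.trans_le (div_nonneg (hu n) n.cast_nonneg), fun b hb => ?_⟩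
  obtain ⟨j, hj⟩ := exists_nat_one_div_lt hb
  filter_upwards [h j, eventually_ge_atTop 1] with n hn hn1
  have hn0 : (0 : ℝ) < n := by exact_mod_cast hn1
  exact ((div_le_iff₀ hn0).mpr hn).trans_lt hj

section Walks

variable {G : Type*} [AddCommGroup G]

lemma sum_range_seqShift_iterate (y : ℕ → G) (k m : ℕ) :
    ∑ i ∈ range m, seqShift^[k] y i = ∑ i ∈ range (k + m), y i - ∑ i ∈ range k, y i := by
  simp only [sum_range_add, add_sub_cancel_left, seqShift_iterate_apply, add_comm]

lemma measurableSet_sum_range_eq_zero [MeasurableSpace G] [MeasurableAdd₂ G]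
    [MeasurableSingletonClass G] (m : ℕ) :
    MeasurableSet {y : ℕ → G | ∑ i ∈ range m, y i = 0} :=
  (measurable_sum _ fun i _ => measurable_pi_apply i) (measurableSet_singleton 0)

variable [DecidableEq G]

noncomputable def returnCount (lo hi : ℕ) (y : ℕ → G) : ℝ :=
  ∑ m ∈ Ico lo hi, if ∑ i ∈ range m, y i = 0 then 1 else 0

lemma returnCount_mono (lo : ℕ) (y : ℕ → G) : Monotone fun hi => returnCount lo hi y :=
  fun _ _ h => sum_le_sum_of_subset_of_nonneg (Ico_subset_Ico_right h)
    fun _ _ _ => by positivity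

lemma returnCount_seqShift_iterate (lo hi k : ℕ) (y : ℕ → G) :
    returnCount lo hi (seqShift^[k] y) =
      ∑ l ∈ Ico (lo + k) (hi + k), if ∑ i ∈ range k, y i = ∑ i ∈ range l, y i then 1 else 0 := by
  simp only [returnCount, ← sum_Ico_add, sum_range_seqShift_iterate, sub_eq_zero, eq_comm]

lemma coincidenceCount_partialSums_le (y : ℕ → G) (A B M : ℕ) :
    coincidenceCount (fun n => ∑ i ∈ range n, y i) A B ≤
      M * M + birkhoffSum seqShift (returnCount M (B + 1)) (A + 1) y := by
  set s : ℕ → G := fun n => ∑ i ∈ range n, y i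
  have hk (k : ℕ) : ∑ l ∈ Icc (A + 1) B, (if s k = s l then (1 : ℝ) else 0) ≤
      #((Icc (A + 1) B).filter (· < k + M)) + returnCount M (B + 1) (seqShift^[k] y) := by
    rw [← sum_filter_add_sum_filter_not _ (· < k + M), returnCount_seqShift_iterate]
    refine add_le_add ?_ (sum_le_sum_of_subset_of_nonneg ?_ fun _ _ _ => by positivity)
    · rw [cast_card]
      exact sum_le_sum fun _ _ => by split_ifs <;> norm_num
    · intro l hl
      simp only [mem_filter, mem_Icc, not_lt] at hl
      simp only [mem_Ico]
      omega
  calc coincidenceCount s A B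
      ≤ ∑ k ∈ range (A + 1), ((#((Icc (A + 1) B).filter (· < k + M)) : ℝ) +
          returnCount M (B + 1) (seqShift^[k] y)) := sum_le_sum fun k _ => hk k
    _ ≤ M * M + birkhoffSum seqShift (returnCount M (B + 1)) (A + 1) y := by
      rw [sum_add_distrib, birkhoffSum]
      gcongr
      exact_mod_cast sum_card_filter_lt_add_le A B M

lemma returnCount_eq_sum_indicator (lo hi : ℕ) :
    returnCount (G := G) lo hi =
      fun y => ∑ m ∈ Ico lo hi, {y : ℕ → G | ∑ i ∈ range m, y i = 0}.indicator 1 y := by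
  ext y
  simp only [returnCount, Set.indicator_apply, Set.mem_ofPred_eq, Pi.one_apply]

variable [MeasurableSpace G] [MeasurableAdd₂ G] [MeasurableSingletonClass G] {ν : Measure (ℕ → G)}

lemma measurable_returnCount (lo hi : ℕ) : Measurable (returnCount (G := G) lo hi) :=
  measurable_sum _ fun m _ =>
    Measurable.ite (measurableSet_sum_range_eq_zero m) measurable_const measurable_const

lemma integrable_returnCount [IsFiniteMeasure ν] (lo hi : ℕ) :
    Integrable (returnCount lo hi) ν := by
  rw [returnCount_eq_sum_indicator]
  exact integrable_finsetSum _ fun m _ =>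
    (integrable_const 1).indicator (measurableSet_sum_range_eq_zero m)

lemma integral_returnCount [IsFiniteMeasure ν] (lo hi : ℕ) :
    ∫ y, returnCount lo hi y ∂ν = ∑ m ∈ Ico lo hi, ν.real {y | ∑ i ∈ range m, y i = 0} := by
  rw [returnCount_eq_sum_indicator, integral_finsetSum _ fun m _ =>
    (integrable_const 1).indicator (measurableSet_sum_range_eq_zero m)]
  simp only [integral_indicator_one (measurableSet_sum_range_eq_zero _)]

lemma measure_exists_birkhoffSum_returnCount_gt_le [IsFiniteMeasure ν]
    (hν : MeasurePreserving seqShift ν ν)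
    (hsum : Summable fun m => ν.real {y | ∑ i ∈ range m, y i = 0}) (M : ℕ) {c : ℝ} (hc : 0 < c) :
    ν {y | ∃ L n : ℕ, n * c < birkhoffSum seqShift (returnCount M L) n y} ≤
      ENNReal.ofReal ((∑' m, ν.real {y | ∑ i ∈ range (m + M), y i = 0}) / c) := by
  set p : ℕ → ℝ := fun m => ν.real {y | ∑ i ∈ range m, y i = 0}
  have hunion : {y : ℕ → G | ∃ L n : ℕ, n * c < birkhoffSum seqShift (returnCount M L) n y} =
      ⋃ L, {y : ℕ → G | ∃ n : ℕ, n * c < birkhoffSum seqShift (returnCount M L) n y} := by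
    ext y
    simp only [Set.mem_iUnion]
    rfl
  have hmono : Monotone fun L =>
      {y : ℕ → G | ∃ n : ℕ, n * c < birkhoffSum seqShift (returnCount M L) n y} :=
    fun _ _ h _ ⟨n, hn⟩ => ⟨n, hn.trans_le (sum_le_sum fun _ _ => returnCount_mono M _ h)⟩
  rw [hunion, hmono.measure_iUnion]
  refine iSup_le fun L => (measure_exists_birkhoffSum_gt_le hν (measurable_returnCount M L)
    ?_ ?_ hc).trans (ENNReal.ofReal_le_ofReal (div_le_div_of_nonneg_right ?_ hc.le))
  · exact integrable_returnCount M L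
  · exact fun y => sum_nonneg fun _ _ => by positivity
  · rw [integral_returnCount, sum_Ico_eq_sum_range]
    calc ∑ t ∈ range (L - M), p (M + t) = ∑ t ∈ range (L - M), p (t + M) := by
          simp only [add_comm]
      _ ≤ ∑' t, p (t + M) := ((summable_nat_add_iff M).mpr hsum).sum_le_tsum _
          fun _ _ => measureReal_nonneg

lemma ae_eventually_coincidenceCount_le [IsProbabilityMeasure ν]
    (hν : MeasurePreserving seqShift ν ν)
    (hsum : Summable fun m => ν.real {y | ∑ i ∈ range m, y i = 0})
    {A B : ℕ → ℕ} {a : ℝ} (ha : 0 ≤ a) (hA : ∀ n, (A n : ℝ) ≤ a * n) {ε : ℝ} (hε : 0 < ε) :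
    ∀ᵐ y ∂ν, ∀ᶠ n in atTop,
      coincidenceCount (fun n => ∑ i ∈ range n, y i) (A n) (B n) ≤ ε * n := by
  set c := ε / (2 * (a + 1)) with hc_def
  have hc : 0 < c := by positivity
  have htail : Tendsto (fun M => ENNReal.ofReal
      ((∑' m, ν.real {y | ∑ i ∈ range (m + M), y i = 0}) / c)) atTop (𝓝 0) := by
    have h := (tendsto_sum_nat_add fun m => ν.real {y : ℕ → G | ∑ i ∈ range m, y i = 0}).div_const c
    rw [zero_div] at h
    simpa only [ENNReal.ofReal_zero] using ENNReal.tendsto_ofReal h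
  rw [ae_iff]
  refine nonpos_iff_eq_zero.mp (ge_of_tendsto' htail fun M => ?_)
  refine (measure_mono fun y hy => ?_).trans
    (measure_exists_birkhoffSum_returnCount_gt_le hν hsum M hc)
  by_contra hbad
  simp only [Set.mem_ofPred_eq, not_exists, not_lt] at hbad
  apply hy
  filter_upwards [eventually_ge_atTop 1,
    tendsto_natCast_atTop_atTop.eventually_ge_atTop (2 * (M * M) / ε)] with n hn hnM
  have hn' : (1 : ℝ) ≤ n := by exact_mod_cast hn
  have hnear : (M * M : ℝ) ≤ ε * n / 2 := by
    rw [div_le_iff₀ hε] at hnM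
    linarith
  have hfar : ((A n : ℝ) + 1) * c ≤ ε * n / 2 := calc
    ((A n : ℝ) + 1) * c ≤ (a + 1) * n * c := by gcongr; linarith [hA n]
    _ = ε * n / 2 := by rw [hc_def]; field_simp
  calc coincidenceCount (fun n => ∑ i ∈ range n, y i) (A n) (B n)
      ≤ M * M + birkhoffSum seqShift (returnCount M (B n + 1)) (A n + 1) y :=
        coincidenceCount_partialSums_le y (A n) (B n) M
    _ ≤ M * M + ((A n : ℝ) + 1) * c := by
        gcongr
        exact_mod_cast hbad (B n + 1) (A n + 1)
    _ ≤ ε * n := by linarith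

lemma ae_tendsto_coincidenceCount_div [IsProbabilityMeasure ν]
    (hν : MeasurePreserving seqShift ν ν)
    (hsum : Summable fun m => ν.real {y | ∑ i ∈ range m, y i = 0})
    {A B : ℕ → ℕ} {a : ℝ} (ha : 0 ≤ a) (hA : ∀ n, (A n : ℝ) ≤ a * n) :
    ∀ᵐ y ∂ν, Tendsto
      (fun n => coincidenceCount (fun n => ∑ i ∈ range n, y i) (A n) (B n) / n) atTop (𝓝 0) := by
  have h := ae_all_iff.mpr fun j : ℕ =>
    ae_eventually_coincidenceCount_le (B := B) hν hsum ha hA (ε := 1 / (j + 1)) (by positivity)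
  filter_upwards [h] with y hy
  exact tendsto_div_natCast_of_forall_eventually_le
    (fun n => sum_nonneg fun _ _ => sum_nonneg fun _ _ => by positivity) hy

end Walks

theorem stmt_11_general
    {Ω : Type*} [MeasurableSpace Ω] (P : Measure Ω) [IsProbabilityMeasure P]
    (d : ℕ)
    (X : ℕ → Ω → (Fin d → ℤ))
    (hmeas : ∀ i, Measurable (X i))
    (hindep : iIndepFun X P)
    (hident : ∀ i, Measure.map (X i) P = Measure.map (X 0) P)
    (S : ℕ → Ω → (Fin d → ℤ))
    (hS : ∀ n ω, S n ω = ∑ i ∈ Finset.range n, X i ω)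
    (htrans : ∑' n : ℕ, P {ω | S (n + 1) ω = 0} < ⊤)
 :
    ∀ a b : ℝ, 0 ≤ a → a < b → ∀ᵐ ω ∂P, Tendsto
      (fun n : ℕ => (∑ k ∈ Finset.range (⌊a * (n : ℝ)⌋₊ + 1),
          ∑ l ∈ Finset.Icc (⌊a * (n : ℝ)⌋₊ + 1) ⌊b * (n : ℝ)⌋₊,
            if S k ω = S l ω then (1 : ℝ) else 0) / n) atTop (nhds 0) := by
  intro a b ha _
  have hX : Measurable fun ω i => X i ω := measurable_pi_lambda _ hmeas
  have : IsProbabilityMeasure (P.map fun ω i => X i ω) :=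
    Measure.isProbabilityMeasure_map hX.aemeasurable
  have hreturn (m : ℕ) : (P.map fun ω i => X i ω).real {y | ∑ i ∈ range m, y i = 0} =
      (P {ω | S m ω = 0}).toReal := by
    rw [measureReal_def, Measure.map_apply hX (measurableSet_sum_range_eq_zero m)]
    simp only [hS]
    rfl
  have hsum : Summable fun m => (P.map fun ω i => X i ω).real {y | ∑ i ∈ range m, y i = 0} := by
    simp only [hreturn]
    exact (summable_nat_add_iff 1).mp (ENNReal.summable_toReal htrans.ne)
  have hwalk := ae_tendsto_coincidenceCount_div (measurePreserving_seqShift_map hmeas hindep hident)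
    hsum (A := fun n => ⌊a * n⌋₊) (B := fun n => ⌊b * n⌋₊) ha fun n => Nat.floor_le (by positivity)
  filter_upwards [ae_of_ae_map hX.aemeasurable hwalk] with ω hω
  have hSω : (fun n => ∑ i ∈ range n, X i ω) = fun n => S n ω := funext fun n => (hS n ω).symm
  rw [hSω] at hω
  exact hω

theorem stmt_11
    {Ω : Type*} [MeasurableSpace Ω] (P : Measure Ω) [IsProbabilityMeasure P]
    (d : ℕ) (hd : 1 ≤ d)
    (X : ℕ → Ω → (Fin d → ℤ))
    (hmeas : ∀ i, Measurable (X i))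
    (hindep : iIndepFun X P)
    (hident : ∀ i, Measure.map (X i) P = Measure.map (X 0) P)
    (S : ℕ → Ω → (Fin d → ℤ))
    (hS : ∀ n ω, S n ω = ∑ i ∈ Finset.range n, X i ω)
    (htrans : ∑' n : ℕ, P {ω | S (n + 1) ω = 0} < ⊤)
 :
    ∀ a b : ℝ, 0 ≤ a → a < b → ∀ᵐ ω ∂P, Tendsto
      (fun n : ℕ => (∑ k ∈ Finset.range (⌊a * (n : ℝ)⌋₊ + 1),
          ∑ l ∈ Finset.Icc (⌊a * (n : ℝ)⌋₊ + 1) ⌊b * (n : ℝ)⌋₊,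
            if S k ω = S l ω then (1 : ℝ) else 0) / n) atTop (nhds 0) :=
  stmt_11_general P d X hmeas hindep hident S hS htrans
end
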